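/- For every α > 0, the function μ ↦ ∫_{-∞}^{∞} (η(μ+z, α) - μ)^2 φ(z) dz is differentiable on ℝ, with derivative at μ equal to 2μ[Φ(α-μ) - Φ(-α-μ)]. -/

import Mathlib

open MeasureTheory Filter

/-- Standard normal probability density function. -/
noncomputable def stdNormalPDF (x : ℝ) : ℝ :=
  (Real.sqrt (2 * Real.pi))⁻¹ * Real.exp (-(x ^ 2) / 2)

/-- Standard normal cumulative distribution function. -/
noncomputable def stdNormalCDF (x : ℝ) : ℝ :=
  ∫ t in Set.Iic x, stdNormalPDF t

/-- Soft-thresholding function `η(x, λ) = sign(x) · max(|x| − λ, 0)`. -/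
noncomputable def softThreshold (x lam : ℝ) : ℝ :=
  Real.sign x * max (|x| - lam) 0

/-!
On the three regions `μ + z ≤ -α`, `|μ + z| ≤ α` and `α ≤ μ + z` the soft-thresholding error
`η(μ + z, α) - μ` equals `z + α`, `-μ` and `z - α` respectively, so the risk is
`∫_{z ≤ -α-μ} (z+α)² φ + μ² (Φ(α-μ) - Φ(-α-μ)) + ∫_{z > α-μ} (z-α)² φ`,
where `μ` enters only through the endpoints and the factor `μ²`.
Differentiating, each boundary term of the tail integrals equals `μ² φ` at that endpoint and
cancels against the corresponding term from differentiating `Φ`, leaving `2μ (Φ(α-μ) - Φ(-α-μ))`.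
-/

open Set

section SetIntegral

variable {E : Type*} [NormedAddCommGroup E] [NormedSpace ℝ E]

theorem integral_eq_Iic_add_Ioc_add_Ioi {μ : Measure ℝ} {f : ℝ → E} (hf : Integrable f μ)
    {a b : ℝ} (hab : a ≤ b) :
    ∫ x, f x ∂μ = (∫ x in Iic a, f x ∂μ) + (∫ x in Ioc a b, f x ∂μ) + ∫ x in Ioi b, f x ∂μ := by
  rw [← intervalIntegral.integral_Iic_add_Ioi (b := b) hf.integrableOn hf.integrableOn,
    ← setIntegral_union (Iic_disjoint_Ioc le_rfl) measurableSet_Ioc hf.integrableOn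
      hf.integrableOn, Iic_union_Ioc_eq_Iic hab]

variable [CompleteSpace E] {g : ℝ → E} {a : ℝ}

theorem hasDerivAt_integral_Iic (hg : Integrable g) (hga : ContinuousAt g a) :
    HasDerivAt (fun b => ∫ x in Iic b, g x) (g a) a := by
  have hsplit : (fun b => ∫ x in Iic b, g x) = fun b => (∫ x in Iic 0, g x) + ∫ x in 0..b, g x :=
    funext fun b => by
      rw [← intervalIntegral.integral_Iic_sub_Iic hg.integrableOn hg.integrableOn,
        add_sub_cancel]
  rw [hsplit]
  exact (intervalIntegral.integral_hasDerivAt_right hg.intervalIntegrable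
    hg.aestronglyMeasurable.stronglyMeasurableAtFilter hga).const_add _

theorem hasDerivAt_integral_Ioi (hg : Integrable g) (hga : ContinuousAt g a) :
    HasDerivAt (fun b => ∫ x in Ioi b, g x) (-g a) a := by
  have hsplit : (fun b => ∫ x in Ioi b, g x) = fun b => (∫ x, g x) - ∫ x in Iic b, g x :=
    funext fun b => by
      rw [← intervalIntegral.integral_Iic_add_Ioi (b := b) hg.integrableOn hg.integrableOn,
        add_sub_cancel_left]
  rw [hsplit]
  exact (hasDerivAt_integral_Iic hg hga).const_sub _

end SetIntegral

section StdNormal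

theorem continuous_stdNormalPDF : Continuous stdNormalPDF := by
  unfold stdNormalPDF
  fun_prop

theorem stdNormalPDF_nonneg (x : ℝ) : 0 ≤ stdNormalPDF x := by
  unfold stdNormalPDF
  positivity

theorem integrable_stdNormalPDF : Integrable stdNormalPDF := by
  refine ((integrable_exp_neg_mul_sq (b := 1 / 2) (by norm_num)).const_mul
    (Real.sqrt (2 * Real.pi))⁻¹).congr (Eventually.of_forall fun x => ?_)
  simp only [stdNormalPDF]
  ring_nf

theorem integrable_sq_mul_stdNormalPDF : Integrable fun x => x ^ 2 * stdNormalPDF x := by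
  refine ((integrable_rpow_mul_exp_neg_mul_sq (b := 1 / 2) (by norm_num)
    (s := 2) (by norm_num)).const_mul (Real.sqrt (2 * Real.pi))⁻¹).congr
    (Eventually.of_forall fun x => ?_)
  simp only [stdNormalPDF, Real.rpow_two]
  ring_nf

theorem integrable_mul_stdNormalPDF_of_abs_le {f : ℝ → ℝ} (hf : AEStronglyMeasurable f)
    {a b : ℝ} (hfab : ∀ x, |f x| ≤ a * x ^ 2 + b) :
    Integrable fun x => f x * stdNormalPDF x := by
  refine Integrable.mono' ((integrable_sq_mul_stdNormalPDF.const_mul a).add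
    (integrable_stdNormalPDF.const_mul b)) (hf.mul continuous_stdNormalPDF.aestronglyMeasurable)
    (Eventually.of_forall fun x => ?_)
  rw [Real.norm_eq_abs, abs_mul, abs_of_nonneg (stdNormalPDF_nonneg x)]
  calc |f x| * stdNormalPDF x ≤ (a * x ^ 2 + b) * stdNormalPDF x :=
        mul_le_mul_of_nonneg_right (hfab x) (stdNormalPDF_nonneg x)
    _ = a * (x ^ 2 * stdNormalPDF x) + b * stdNormalPDF x := by ring

theorem integrable_sub_sq_mul_stdNormalPDF (c : ℝ) :
    Integrable fun x => (x - c) ^ 2 * stdNormalPDF x :=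
  integrable_mul_stdNormalPDF_of_abs_le (by fun_prop) (a := 2) (b := 2 * c ^ 2) fun x => by
    rw [abs_of_nonneg (sq_nonneg _)]
    nlinarith [sq_nonneg (x + c)]

theorem continuous_sub_sq_mul_stdNormalPDF (c : ℝ) :
    Continuous fun x => (x - c) ^ 2 * stdNormalPDF x :=
  ((continuous_id.sub continuous_const).pow 2).mul continuous_stdNormalPDF

theorem hasDerivAt_stdNormalCDF (x : ℝ) : HasDerivAt stdNormalCDF (stdNormalPDF x) x :=
  hasDerivAt_integral_Iic integrable_stdNormalPDF continuous_stdNormalPDF.continuousAt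

theorem stdNormalCDF_sub_stdNormalCDF {a b : ℝ} (hab : a ≤ b) :
    stdNormalCDF b - stdNormalCDF a = ∫ x in Ioc a b, stdNormalPDF x := by
  rw [stdNormalCDF, stdNormalCDF, intervalIntegral.integral_Iic_sub_Iic
    integrable_stdNormalPDF.integrableOn integrable_stdNormalPDF.integrableOn,
    intervalIntegral.integral_of_le hab]

end StdNormal

section SoftThreshold

variable {lam : ℝ}

theorem softThreshold_eq_max_sub_max (hlam : 0 ≤ lam) (x : ℝ) :
    softThreshold x lam = max (x - lam) 0 - max (-x - lam) 0 := by
  rcases lt_trichotomy x 0 with hx | rfl | hx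
  · rw [softThreshold, Real.sign_of_neg hx, abs_of_neg hx,
      max_eq_right (by linarith : x - lam ≤ 0)]
    ring
  · simp [softThreshold, hlam]
  · rw [softThreshold, Real.sign_of_pos hx, abs_of_pos hx,
      max_eq_right (by linarith : -x - lam ≤ 0)]
    ring

theorem continuous_softThreshold (hlam : 0 ≤ lam) : Continuous fun x => softThreshold x lam := by
  simp_rw [softThreshold_eq_max_sub_max hlam]
  fun_prop

theorem abs_softThreshold_le (hlam : 0 ≤ lam) (x : ℝ) : |softThreshold x lam| ≤ |x| := by
  rw [softThreshold_eq_max_sub_max hlam]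
  grind

theorem softThreshold_of_le {x : ℝ} (hlam : 0 ≤ lam) (hx : lam ≤ x) :
    softThreshold x lam = x - lam := by
  rw [softThreshold_eq_max_sub_max hlam, max_eq_left (by linarith),
    max_eq_right (by linarith)]
  ring

theorem softThreshold_of_le_neg {x : ℝ} (hlam : 0 ≤ lam) (hx : x ≤ -lam) :
    softThreshold x lam = x + lam := by
  rw [softThreshold_eq_max_sub_max hlam, max_eq_right (by linarith),
    max_eq_left (by linarith)]
  ring

theorem softThreshold_of_abs_le {x : ℝ} (hx : |x| ≤ lam) : softThreshold x lam = 0 := by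
  rw [softThreshold, max_eq_right (sub_nonpos.2 hx), mul_zero]

end SoftThreshold

theorem integrable_softThreshold_risk_integrand {α : ℝ} (hα : 0 ≤ α) (μ : ℝ) :
    Integrable fun z => (softThreshold (μ + z) α - μ) ^ 2 * stdNormalPDF z := by
  refine integrable_mul_stdNormalPDF_of_abs_le (a := 2) (b := 8 * μ ^ 2)
    (((continuous_softThreshold hα).comp (continuous_const.add continuous_id)).sub
      continuous_const |>.pow 2).aestronglyMeasurable fun z => ?_
  have hη := abs_softThreshold_le hα (μ + z)
  have herr : |softThreshold (μ + z) α - μ| ≤ |z| + 2 * |μ| := by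
    grind [abs_sub, abs_add_le]
  rw [abs_of_nonneg (sq_nonneg _), ← sq_abs]
  nlinarith [abs_nonneg (softThreshold (μ + z) α - μ), sq_abs z, sq_abs μ,
    sq_nonneg (|z| - 2 * |μ|)]

theorem softThreshold_risk_eq {α : ℝ} (hα : 0 ≤ α) (μ : ℝ) :
    ∫ z, (softThreshold (μ + z) α - μ) ^ 2 * stdNormalPDF z =
      (∫ z in Iic (-α - μ), (z - -α) ^ 2 * stdNormalPDF z) +
        μ ^ 2 * (stdNormalCDF (α - μ) - stdNormalCDF (-α - μ)) +
        ∫ z in Ioi (α - μ), (z - α) ^ 2 * stdNormalPDF z := by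
  rw [integral_eq_Iic_add_Ioc_add_Ioi (integrable_softThreshold_risk_integrand hα μ)
    (by linarith : -α - μ ≤ α - μ), stdNormalCDF_sub_stdNormalCDF (by linarith),
    ← integral_const_mul]
  have hlow : EqOn (fun z => (softThreshold (μ + z) α - μ) ^ 2 * stdNormalPDF z)
      (fun z => (z - -α) ^ 2 * stdNormalPDF z) (Iic (-α - μ)) := fun z (hz : z ≤ -α - μ) => by
    dsimp only
    rw [softThreshold_of_le_neg hα (by linarith)]
    ring
  have hmid : EqOn (fun z => (softThreshold (μ + z) α - μ) ^ 2 * stdNormalPDF z)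
      (fun z => μ ^ 2 * stdNormalPDF z) (Ioc (-α - μ) (α - μ)) := fun z hz => by
    dsimp only
    rw [softThreshold_of_abs_le (abs_le.2 ⟨by linarith [hz.1], by linarith [hz.2]⟩)]
    ring
  have hup : EqOn (fun z => (softThreshold (μ + z) α - μ) ^ 2 * stdNormalPDF z)
      (fun z => (z - α) ^ 2 * stdNormalPDF z) (Ioi (α - μ)) := fun z (hz : α - μ < z) => by
    dsimp only
    rw [softThreshold_of_le hα (by linarith)]
    ring
  rw [setIntegral_congr_fun measurableSet_Iic hlow, setIntegral_congr_fun measurableSet_Ioc hmid,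
    setIntegral_congr_fun measurableSet_Ioi hup]

theorem risk_deriv_in_mu (α : ℝ) (hα : 0 < α) (μ : ℝ) :
    HasDerivAt
      (fun μ : ℝ => ∫ z : ℝ, (softThreshold (μ + z) α - μ) ^ 2 * stdNormalPDF z)
      (2 * μ * (stdNormalCDF (α - μ) - stdNormalCDF (-α - μ))) μ := by
  have hconst_sub (c : ℝ) : HasDerivAt (fun m : ℝ => c - m) (-1) μ := by
    simpa using (hasDerivAt_id μ).const_sub c
  have hlow := (hasDerivAt_integral_Iic (integrable_sub_sq_mul_stdNormalPDF (-α))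
    (continuous_sub_sq_mul_stdNormalPDF (-α)).continuousAt).comp μ (hconst_sub (-α))
  have hmid := (hasDerivAt_pow 2 μ).mul
    (((hasDerivAt_stdNormalCDF _).comp μ (hconst_sub α)).sub
      ((hasDerivAt_stdNormalCDF _).comp μ (hconst_sub (-α))))
  have hup := (hasDerivAt_integral_Ioi (integrable_sub_sq_mul_stdNormalPDF α)
    (continuous_sub_sq_mul_stdNormalPDF α).continuousAt).comp μ (hconst_sub α)
  rw [funext (softThreshold_risk_eq hα.le)]
  refine ((hlow.add hmid).add hup).congr_deriv ?_
  simp only [Pi.sub_apply, Function.comp_apply]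
  ring
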